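/- Let S and T be operators with 0 ≤ S ≤ I and T ≥ 0, and let c > 0. Then I − (S+T)^{-1/2} S (S+T)^{-1/2} ≤ (1+c)(I − S) + (2 + c + c^{-1}) T, where (S+T)^{-1/2} denotes the square root of the generalized (Moore–Penrose) inverse of S + T. -/

import Mathlib

/-!
Write `m = s + t` and let `x` be the generalized inverse square root of `m`, so that
`x m = m x = √m` and `x m x ≤ 1`. Then `1 - x s x = (1 - x m x) + x t x`. Splitting
`x = 1 + (x - 1)` and using the operator AM–GM inequality `b⋆ t a + a⋆ t b ≤ c⁻¹ a⋆ t a + c b⋆ t b` gives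
`x t x ≤ (1 + c⁻¹) t + (1 + c) (x - 1) t (x - 1)`, and `(x - 1) t (x - 1) ≤ (x - 1) m (x - 1)
= x m x - 2√m + m`. Finally `s ≤ √m` by operator monotonicity of the square root, because
`s² ≤ s ≤ m` when `0 ≤ s ≤ 1`.
-/

open Matrix BigOperators Kronecker
open scoped Classical ComplexOrder

variable {d : Type*} [Fintype d] [DecidableEq d]

/-- Trace norm of a matrix. -/
noncomputable def traceNorm (A : Matrix d d ℂ) : ℝ :=
  (((Matrix.posSemidef_conjTranspose_mul_self A).1.eigenvectorUnitary : Matrix d d ℂ) *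
      Matrix.diagonal (fun i => ((Real.sqrt
        ((Matrix.posSemidef_conjTranspose_mul_self A).1.eigenvalues i) : ℝ) : ℂ)) *
      star ((Matrix.posSemidef_conjTranspose_mul_self A).1.eigenvectorUnitary :
        Matrix d d ℂ)).trace.re

/-- Spectral functional calculus for a Hermitian matrix. -/
noncomputable def specFun {A : Matrix d d ℂ} (hA : A.IsHermitian) (f : ℝ → ℝ) :
    Matrix d d ℂ :=
  (hA.eigenvectorUnitary : Matrix d d ℂ) *
    Matrix.diagonal (fun i => (f (hA.eigenvalues i) : ℂ)) *
    star (hA.eigenvectorUnitary : Matrix d d ℂ)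

/-- Matrix power via functional calculus, with the convention `0 ^ s = 0` on kernels.
For `s = -1/2` this gives the square root of the Moore–Penrose inverse. -/
noncomputable def mpow (A : Matrix d d ℂ) (s : ℝ) : Matrix d d ℂ :=
  if hA : A.PosSemidef then
    specFun hA.1 (fun t => if t = 0 then 0 else t ^ s)
  else 0

/-- Base-2 matrix logarithm via functional calculus, `log 0 := 0` on kernels. -/
noncomputable def mlog (A : Matrix d d ℂ) : Matrix d d ℂ :=
  if hA : A.PosSemidef then
    specFun hA.1 (fun t => if t = 0 then 0 else Real.logb 2 t)
  else 0

/-- Positive spectral projection `{X ≥ 0}` of a Hermitian matrix. -/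
noncomputable def posProj {A : Matrix d d ℂ} (hA : A.IsHermitian) : Matrix d d ℂ :=
  specFun hA (fun t => if 0 ≤ t then 1 else 0)

/-- A density operator: positive semi-definite with unit trace. -/
def IsDensity (ρ : Matrix d d ℂ) : Prop := ρ.PosSemidef ∧ ρ.trace = 1

/-- A measurement operator: `0 ≤ Λ ≤ I`. -/
def IsMeasOp (Λ : Matrix d d ℂ) : Prop := Λ.PosSemidef ∧ (1 - Λ).PosSemidef

/-- `n`-fold tensor power of a matrix. -/
def tpow (ρ : Matrix d d ℂ) (n : ℕ) : Matrix (Fin n → d) (Fin n → d) ℂ :=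
  Matrix.of fun x y => ∏ i, ρ (x i) (y i)

/-- Partial trace over the right (second) tensor factor. -/
noncomputable def ptraceR {a b : Type*} [Fintype a] [Fintype b]
    (ρ : Matrix (a × b) (a × b) ℂ) : Matrix a a ℂ :=
  Matrix.of fun i j => ∑ k, ρ (i, k) (j, k)

/-- Partial trace over the left (first) tensor factor. -/
noncomputable def ptraceL {a b : Type*} [Fintype a] [Fintype b]
    (ρ : Matrix (a × b) (a × b) ℂ) : Matrix b b ℂ :=
  Matrix.of fun i j => ∑ k, ρ (k, i) (k, j)

/-- Quantum relative entropy (base 2), via the `mlog` convention. -/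
noncomputable def qRelEnt (ρ σ : Matrix d d ℂ) : ℝ :=
  ((ρ * (mlog ρ - mlog σ)).trace).re

/-- ε-hypothesis testing relative entropy. -/
noncomputable def DH (ε : ℝ) (ρ σ : Matrix d d ℂ) : ℝ :=
  -Real.logb 2 (sInf {x : ℝ | ∃ Λ : Matrix d d ℂ,
    IsMeasOp Λ ∧ 1 - ε ≤ ((Λ * ρ).trace).re ∧ x = ((Λ * σ).trace).re})

/-- Petz–Rényi relative entropy of order α. -/
noncomputable def DAlpha (α : ℝ) (ρ σ : Matrix d d ℂ) : ℝ :=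
  (1 / (α - 1)) * Real.logb 2 (((mpow ρ α * mpow σ (1 - α)).trace).re)

/-- Shannon entropy (bits) of a probability vector. -/
noncomputable def shannon (p : d → ℝ) : ℝ := -∑ x, p x * Real.logb 2 (p x)

/-- von Neumann entropy (bits). -/
noncomputable def vnEntropy (A : Matrix d d ℂ) : ℝ :=
  if hA : A.IsHermitian then -∑ i, hA.eigenvalues i * Real.logb 2 (hA.eigenvalues i) else 0

/-- Collision (order-2) conditional entropy `H₂(C|S)` of a bipartite state on `s ⊗ c`. -/
noncomputable def H2cond {s c : Type*} [Fintype s] [Fintype c] [DecidableEq s] [DecidableEq c]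
    (ω : Matrix (s × c) (s × c) ℂ) : ℝ :=
  -Real.logb 2 ((ω * (mpow (ptraceR ω) (-(1/2)) ⊗ₖ (1 : Matrix c c ℂ)) *
      ω * (mpow (ptraceR ω) (-(1/2)) ⊗ₖ (1 : Matrix c c ℂ))).trace).re

section CStarAlgebra

open CFC

variable {A : Type*} [CStarAlgebra A] [PartialOrder A] [StarOrderedRing A]

theorem star_add_mul_mul_add_le (a b : A) {t : A} (ht : 0 ≤ t) {c : ℝ} (hc : 0 < c) :
    star (a + b) * t * (a + b) ≤ (1 + c⁻¹) • (star a * t * a) + (1 + c) • (star b * t * b) := by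
  have key : (1 + c⁻¹) • (star a * t * a) + (1 + c) • (star b * t * b) - star (a + b) * t * (a + b)
      = c⁻¹ • (star (a - c • b) * t * (a - c • b)) := by
    simp only [star_add, star_sub, star_smul, star_trivial, add_mul, mul_add, sub_mul, mul_sub,
      smul_mul_assoc, mul_smul_comm, smul_sub, smul_smul]
    match_scalars <;> field_simp <;> ring
  exact sub_nonneg.mp (key ▸ smul_nonneg (inv_nonneg.mpr hc.le) (star_left_conjugate_nonneg ht _))

theorem mul_self_le_self_of_le_one {s : A} (hs : 0 ≤ s) (hs1 : s ≤ 1) : s * s ≤ s := by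
  have h := (sqrt_nonneg s).isSelfAdjoint.conjugate_le_conjugate hs1
  rwa [mul_one, sqrt_mul_sqrt_self s, ← sqrt_mul_sqrt_self s, ← mul_assoc, mul_assoc _ (sqrt s),
    sqrt_mul_sqrt_self s, sqrt_mul_sqrt_self s] at h

theorem le_sqrt_of_mul_self_le {s m : A} (hs : 0 ≤ s) (h : s * s ≤ m) : s ≤ sqrt m := by
  calc s = sqrt (s ^ 2) := (sqrt_sq s).symm
    _ ≤ sqrt m := sqrt_le_sqrt _ _ (by rwa [sq])

theorem one_sub_mul_mul_le_of_mul_eq_sqrt {s t x : A} (hs : 0 ≤ s) (hs1 : s ≤ 1) (ht : 0 ≤ t)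
    (hx : IsSelfAdjoint x) (hxm : x * (s + t) = sqrt (s + t)) (hmx : (s + t) * x = sqrt (s + t))
    (hxmx : x * (s + t) * x ≤ 1) {c : ℝ} (hc : 0 < c) :
    1 - x * s * x ≤ (1 + c) • (1 - s) + (2 + c + c⁻¹) • t := by
  set m := s + t
  have hsm : s ≤ sqrt m := le_sqrt_of_mul_self_le hs <|
    (mul_self_le_self_of_le_one hs hs1).trans (le_add_of_nonneg_right ht)
  have hxtx : x * t * x ≤ (1 + c⁻¹) • t + (1 + c) • ((x - 1) * m * (x - 1)) := by
    have h := star_add_mul_mul_add_le 1 (x - 1) ht hc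
    simp only [star_one, one_mul, mul_one, add_sub_cancel, star_sub, hx.star_eq] at h
    refine h.trans ?_
    gcongr
    exact (hx.sub (.one A)).conjugate_le_conjugate (le_add_of_nonneg_left hs)
  have hexpand : (x - 1) * m * (x - 1) = x * m * x - (2 : ℝ) • sqrt m + m := by
    calc (x - 1) * m * (x - 1) = x * m * x - x * m - m * x + m := by noncomm_ring
      _ = x * m * x - (2 : ℝ) • sqrt m + m := by rw [hxm, hmx, two_smul, sub_sub]
  calc 1 - x * s * x = (1 - x * m * x) + x * t * x := by simp only [m]; noncomm_ring
    _ ≤ (1 - x * m * x) + ((1 + c⁻¹) • t + (1 + c) • (x * m * x - (2 : ℝ) • sqrt m + m)) := by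
      rw [← hexpand]; gcongr
    _ = 1 + c • (x * m * x) + (1 + c⁻¹) • t + (1 + c) • m - (2 * (1 + c)) • sqrt m := by module
    _ ≤ 1 + c • 1 + (1 + c⁻¹) • t + (1 + c) • m - (2 * (1 + c)) • s := by gcongr
    _ = (1 + c) • (1 - s) + (2 + c + c⁻¹) • t := by simp only [m]; module

theorem sqrt_eq_cfc_real_sqrt {m : A} (hm : 0 ≤ m) : sqrt m = cfc Real.sqrt m := by
  rw [sqrt_eq_real_sqrt m hm, cfcₙ_eq_cfc]

-- `(√0)⁻¹ = 0`, so this is the inverse square root of `m` on its support and `0` on its kernel.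
theorem cfc_inv_sqrt_mul_self {m : A} (hm : 0 ≤ m)
    (hcont : ContinuousOn (fun t : ℝ => (√t)⁻¹) (spectrum ℝ m) := by cfc_cont_tac) :
    cfc (fun t : ℝ => (√t)⁻¹) m * m = sqrt m := by
  nth_rewrite 2 [← cfc_id' ℝ m]
  rw [← cfc_mul _ _ m, sqrt_eq_cfc_real_sqrt hm]
  exact cfc_congr fun t _ => by rw [inv_mul_eq_div, Real.div_sqrt]

theorem mul_cfc_inv_sqrt_self {m : A} (hm : 0 ≤ m)
    (hcont : ContinuousOn (fun t : ℝ => (√t)⁻¹) (spectrum ℝ m) := by cfc_cont_tac) :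
    m * cfc (fun t : ℝ => (√t)⁻¹) m = sqrt m := by
  nth_rewrite 1 [← cfc_id' ℝ m]
  rw [← cfc_mul _ _ m, sqrt_eq_cfc_real_sqrt hm]
  exact cfc_congr fun t _ => by rw [← div_eq_mul_inv, Real.div_sqrt]

theorem cfc_inv_sqrt_mul_self_mul_le_one {m : A} (hm : 0 ≤ m)
    (hcont : ContinuousOn (fun t : ℝ => (√t)⁻¹) (spectrum ℝ m) := by cfc_cont_tac) :
    cfc (fun t : ℝ => (√t)⁻¹) m * m * cfc (fun t : ℝ => (√t)⁻¹) m ≤ 1 := by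
  rw [cfc_inv_sqrt_mul_self hm, sqrt_eq_cfc_real_sqrt hm, ← cfc_mul _ _ m]
  exact cfc_le_one _ m fun t _ => mul_inv_le_one

theorem one_sub_cfc_inv_sqrt_mul_mul_le {s t : A} (hs : 0 ≤ s) (hs1 : s ≤ 1) (ht : 0 ≤ t)
    (hcont : ContinuousOn (fun t : ℝ => (√t)⁻¹) (spectrum ℝ (s + t))) {c : ℝ} (hc : 0 < c) :
    1 - cfc (fun t : ℝ => (√t)⁻¹) (s + t) * s * cfc (fun t : ℝ => (√t)⁻¹) (s + t)
      ≤ (1 + c) • (1 - s) + (2 + c + c⁻¹) • t :=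
  have hm := add_nonneg hs ht
  one_sub_mul_mul_le_of_mul_eq_sqrt hs hs1 ht (cfc_predicate _ _)
    (cfc_inv_sqrt_mul_self hm hcont) (mul_cfc_inv_sqrt_self hm hcont)
    (cfc_inv_sqrt_mul_self_mul_le_one hm hcont) hc

end CStarAlgebra

theorem specFun_eq_cfc {A : Matrix d d ℂ} (hA : A.IsHermitian) (f : ℝ → ℝ) :
    specFun hA f = cfc f A := by
  rw [hA.cfc_eq]
  rfl

open scoped MatrixOrder in
theorem mpow_neg_half_eq_cfc {A : Matrix d d ℂ} (hA : A.PosSemidef) :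
    mpow A (-(1 / 2)) = cfc (fun t : ℝ => (√t)⁻¹) A := by
  rw [mpow, dif_pos hA, specFun_eq_cfc]
  refine cfc_congr fun t ht => ?_
  have ht0 : 0 ≤ t := spectrum_nonneg_of_nonneg hA.nonneg ht
  rcases ht0.eq_or_lt with rfl | htpos
  · simp
  · simp [htpos.ne', Real.rpow_neg ht0, Real.sqrt_eq_rpow]

/-- **Hayashi–Nagaoka operator inequality.** For `0 ≤ S ≤ I`, `T ≥ 0` and `c > 0`,
`I - (S+T)^{-1/2} S (S+T)^{-1/2} ≤ (1+c)(I-S) + (2+c+c⁻¹)T`, where `(S+T)^{-1/2}` is the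
square root of the Moore–Penrose inverse of `S + T`. -/
theorem hayashi_nagaoka (S T : Matrix d d ℂ)
    (hS : S.PosSemidef) (hSI : (1 - S).PosSemidef) (hT : T.PosSemidef)
    (c : ℝ) (hc : 0 < c) :
    (((1 + c : ℝ) : ℂ) • (1 - S) + ((2 + c + c⁻¹ : ℝ) : ℂ) • T -
      (1 - mpow (S + T) (-(1/2)) * S * mpow (S + T) (-(1/2)))).PosSemidef := by
  open scoped MatrixOrder Matrix.Norms.L2Operator in
  · rw [mpow_neg_half_eq_cfc (hS.add hT), Complex.coe_smul, Complex.coe_smul, ← Matrix.le_iff]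
    exact one_sub_cfc_inv_sqrt_mul_mul_le hS.nonneg (Matrix.le_iff.mpr hSI) hT.nonneg
      ((spectrum ℝ (S + T)).toFinite.continuousOn _) hc
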